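/- arXiv:1108.5931 — 4 statements merged into one kernel-verified Lean document; each statement's English description precedes it below -/
import Mathlib

section
/- Let W : ℝ³ → ℝ be continuous and let u ∈ C²(ℝ³) be a strictly positive function, bounded together with its first and second derivatives, satisfying −(1/2)Δu + Wu = Eu on ℝ³ for some E ∈ ℝ. Then for every φ ∈ C_c^∞(ℝ³, ℂ) one has the energy decoupling identity (1/2)∫_{ℝ³}|∇(uφ)|² + ∫_{ℝ³} W u² |φ|² = E ∫_{ℝ³} u² |φ|² + (1/2)∫_{ℝ³} u² |∇φ|². -/
open MeasureTheory Filter Complex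
open scoped RealInnerProductSpace ENNReal

noncomputable section

/-- Physical space `ℝ³`. -/
abbrev V3 : Type := EuclideanSpace ℝ (Fin 3)

/-- The `i`-th standard basis vector of `ℝ³`. -/
def e3 (i : Fin 3) : V3 := EuclideanSpace.single i 1

/-- The Laplacian of a twice differentiable real-valued function. -/
def lapR (u : V3 → ℝ) (x : V3) : ℝ :=
  ∑ i, fderiv ℝ (fun y => fderiv ℝ u y (e3 i)) x (e3 i)

lemma integral_fderiv_apply_eq_zero {g : V3 → ℝ} (hg : ContDiff ℝ 1 g)
    (hgs : HasCompactSupport g) (v : V3) : ∫ x : V3, fderiv ℝ g x v = 0 := by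
  have hfc : Continuous fun x : V3 => fderiv ℝ g x v :=
    (ContinuousLinearMap.apply ℝ ℝ v).continuous.comp (hg.continuous_fderiv one_ne_zero)
  have hfs : HasCompactSupport fun x : V3 => fderiv ℝ g x v := hgs.fderiv_apply ℝ v
  have h := integral_mul_fderiv_eq_neg_fderiv_mul_of_integrable
      (μ := (volume : Measure V3)) (f := fun _ : V3 => (1:ℝ)) (g := g) (v := v)
      ?_ ?_ ?_ (fun x _ => differentiableAt_const (1:ℝ)) (fun x _ => hg.differentiable one_ne_zero x)
  · simpa using h
  · have : (fun x : V3 => fderiv ℝ (fun _ : V3 => (1:ℝ)) x v * g x) = fun _ => 0 := by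
      funext x; simp
    rw [this]; exact integrable_zero _ _ _
  · simpa using hfc.integrable_of_hasCompactSupport hfs
  · simpa using hg.continuous.integrable_of_hasCompactSupport hgs

lemma fderiv_mul_apply' {f g : V3 → ℝ} (hf : Differentiable ℝ f) (hg : Differentiable ℝ g)
    (x v : V3) :
    fderiv ℝ (fun y => f y * g y) x v = fderiv ℝ f x v * g x + f x * fderiv ℝ g x v := by
  rw [fderiv_fun_mul (hf x) (hg x)]
  simp only [ContinuousLinearMap.add_apply, ContinuousLinearMap.smul_apply, smul_eq_mul]
  ring

lemma fderiv_re' {f : V3 → ℂ} (hf : Differentiable ℝ f) (x v : V3) :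
    fderiv ℝ (fun y => (f y).re) x v = (fderiv ℝ f x v).re := by
  have h := (Complex.reCLM.hasFDerivAt.comp x (hf x).hasFDerivAt).fderiv
  have e : (fun y => (f y).re) = (⇑Complex.reCLM ∘ f) := rfl
  rw [e, h]; rfl

lemma fderiv_im' {f : V3 → ℂ} (hf : Differentiable ℝ f) (x v : V3) :
    fderiv ℝ (fun y => (f y).im) x v = (fderiv ℝ f x v).im := by
  have h := (Complex.imCLM.hasFDerivAt.comp x (hf x).hasFDerivAt).fderiv
  have e : (fun y => (f y).im) = (⇑Complex.imCLM ∘ f) := rfl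
  rw [e, h]; rfl

lemma sq_norm_complex (z : ℂ) : ‖z‖ ^ 2 = z.re * z.re + z.im * z.im := by
  rw [Complex.sq_norm, Complex.normSq_apply]

/-- energy decoupling: if `u > 0` is a bounded `C²` solution (with bounded
first and second derivatives) of `-(1/2)Δu + Wu = Eu` with `W` continuous, then for every
smooth compactly supported `φ`,
`(1/2)∫|∇(uφ)|² + ∫ W u²|φ|² = E ∫ u²|φ|² + (1/2)∫ u²|∇φ|²`. -/
theorem energy_decoupling (W : V3 → ℝ) (hW : Continuous W)
    (u : V3 → ℝ) (hu : ContDiff ℝ 2 u) (hpos : ∀ x, 0 < u x)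
    (hbound : ∃ C : ℝ, ∀ x : V3,
      |u x| ≤ C ∧ ‖fderiv ℝ u x‖ ≤ C ∧ ‖fderiv ℝ (fderiv ℝ u) x‖ ≤ C)
    (E : ℝ) (hPDE : ∀ x : V3, -(1 / 2) * lapR u x + W x * u x = E * u x)
    (φ : V3 → ℂ) (hφ : ContDiff ℝ (⊤ : ℕ∞) φ) (hsupp : HasCompactSupport φ) :
    (1 / 2) * (∫ x : V3, ∑ i, ‖fderiv ℝ (fun y => (u y : ℂ) * φ y) x (e3 i)‖ ^ 2) +
        (∫ x : V3, W x * ((u x) ^ 2 * ‖φ x‖ ^ 2))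
      = E * (∫ x : V3, (u x) ^ 2 * ‖φ x‖ ^ 2) +
        (1 / 2) * (∫ x : V3, (u x) ^ 2 * ∑ i, ‖fderiv ℝ φ x (e3 i)‖ ^ 2) := by
  have hud : Differentiable ℝ u := hu.differentiable two_ne_zero
  have hu1 : ContDiff ℝ 1 u := hu.of_le one_le_two
  have hfd1 : ContDiff ℝ 1 (fderiv ℝ u) := hu.fderiv_right (by norm_num)
  have hφd : Differentiable ℝ φ := hφ.differentiable (by simp)
  have hφ1 : ContDiff ℝ 1 φ := hφ.of_le (by simp)
  have hpc : ContDiff ℝ 1 (fun y => (φ y).re) := Complex.reCLM.contDiff.comp hφ1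
  have hqc : ContDiff ℝ 1 (fun y => (φ y).im) := Complex.imCLM.contDiff.comp hφ1
  have hpd : Differentiable ℝ (fun y => (φ y).re) := hpc.differentiable one_ne_zero
  have hqd : Differentiable ℝ (fun y => (φ y).im) := hqc.differentiable one_ne_zero
  have hduc : ∀ i, ContDiff ℝ 1 (fun y => fderiv ℝ u y (e3 i)) := fun i =>
    (ContinuousLinearMap.apply ℝ ℝ (e3 i)).contDiff.comp hfd1
  have hdud : ∀ i, Differentiable ℝ (fun y => fderiv ℝ u y (e3 i)) := fun i =>
    (hduc i).differentiable one_ne_zero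
  -- the localization function g = |φ|²
  have hgc : ContDiff ℝ 1 (fun y => (φ y).re * (φ y).re + (φ y).im * (φ y).im) :=
    (hpc.mul hpc).add (hqc.mul hqc)
  have hgd : Differentiable ℝ (fun y => (φ y).re * (φ y).re + (φ y).im * (φ y).im) :=
    hgc.differentiable one_ne_zero
  have hgs : HasCompactSupport (fun y => (φ y).re * (φ y).re + (φ y).im * (φ y).im) := by
    have e : (fun y => (φ y).re * (φ y).re + (φ y).im * (φ y).im)
        = (fun z : ℂ => z.re * z.re + z.im * z.im) ∘ φ := rfl
    rw [e]; exact hsupp.comp_left (by simp)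
  -- the auxiliary functions h i
  set h : Fin 3 → V3 → ℝ := fun i y =>
    u y * fderiv ℝ u y (e3 i) * ((φ y).re * (φ y).re + (φ y).im * (φ y).im) with hhdef
  have hhc : ∀ i, ContDiff ℝ 1 (h i) := fun i => (hu1.mul (hduc i)).mul hgc
  have hhs : ∀ i, HasCompactSupport (h i) := fun i => hgs.mul_left
  have key0 : ∀ i, ∫ x : V3, fderiv ℝ (h i) x (e3 i) = 0 := fun i =>
    integral_fderiv_apply_eq_zero (hhc i) (hhs i) _
  -- the complex product uφ
  have hψd : Differentiable ℝ (fun y => (u y : ℂ) * φ y) :=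
    (Complex.ofRealCLM.differentiable.comp hud).mul hφd
  have hψc : ContDiff ℝ 1 (fun y => (u y : ℂ) * φ y) :=
    (Complex.ofRealCLM.contDiff.comp hu1).mul hφ1
  -- derivative of u·re φ and u·im φ as re/im of derivative of uφ
  have hup : ∀ (i : Fin 3) (x : V3),
      fderiv ℝ (fun y => u y * (φ y).re) x (e3 i)
        = (fderiv ℝ (fun y => (u y : ℂ) * φ y) x (e3 i)).re := by
    intro i x
    have e : (fun y => ((u y : ℂ) * φ y).re) = fun y => u y * (φ y).re := by
      funext y; simp [Complex.mul_re]
    rw [← e, fderiv_re' hψd]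
  have huq : ∀ (i : Fin 3) (x : V3),
      fderiv ℝ (fun y => u y * (φ y).im) x (e3 i)
        = (fderiv ℝ (fun y => (u y : ℂ) * φ y) x (e3 i)).im := by
    intro i x
    have e : (fun y => ((u y : ℂ) * φ y).im) = fun y => u y * (φ y).im := by
      funext y; simp [Complex.mul_im]
    rw [← e, fderiv_im' hψd]
  -- norms in terms of re/im
  have hnorm_uφ : ∀ (i : Fin 3) (x : V3),
      ‖fderiv ℝ (fun y => (u y : ℂ) * φ y) x (e3 i)‖ ^ 2
        = fderiv ℝ (fun y => u y * (φ y).re) x (e3 i)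
            * fderiv ℝ (fun y => u y * (φ y).re) x (e3 i)
          + fderiv ℝ (fun y => u y * (φ y).im) x (e3 i)
            * fderiv ℝ (fun y => u y * (φ y).im) x (e3 i) := by
    intro i x; rw [sq_norm_complex, hup i x, huq i x]
  have hnorm_φ : ∀ (i : Fin 3) (x : V3),
      ‖fderiv ℝ φ x (e3 i)‖ ^ 2
        = fderiv ℝ (fun y => (φ y).re) x (e3 i) * fderiv ℝ (fun y => (φ y).re) x (e3 i)
          + fderiv ℝ (fun y => (φ y).im) x (e3 i) * fderiv ℝ (fun y => (φ y).im) x (e3 i) := by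
    intro i x; rw [sq_norm_complex, fderiv_re' hφd, fderiv_im' hφd]
  have hgnorm : ∀ x : V3, ‖φ x‖ ^ 2 = (φ x).re * (φ x).re + (φ x).im * (φ x).im :=
    fun x => sq_norm_complex _
  -- derivative of g
  have hgder : ∀ (x v : V3),
      fderiv ℝ (fun y => (φ y).re * (φ y).re + (φ y).im * (φ y).im) x v
        = (fderiv ℝ (fun y => (φ y).re) x v * (φ x).re
              + (φ x).re * fderiv ℝ (fun y => (φ y).re) x v)
          + (fderiv ℝ (fun y => (φ y).im) x v * (φ x).im
              + (φ x).im * fderiv ℝ (fun y => (φ y).im) x v) := by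
    intro x v
    rw [fderiv_fun_add (𝕜 := ℝ) (f := fun y => (φ y).re * (φ y).re)
        (g := fun y => (φ y).im * (φ y).im) ((hpd x).mul (hpd x)) ((hqd x).mul (hqd x))]
    rw [ContinuousLinearMap.add_apply, fderiv_mul_apply' hpd hpd, fderiv_mul_apply' hqd hqd]
  -- derivative of h i
  have hhder : ∀ (i : Fin 3) (x : V3),
      fderiv ℝ (h i) x (e3 i)
        = (fderiv ℝ u x (e3 i) * fderiv ℝ u x (e3 i)
              + u x * fderiv ℝ (fun y => fderiv ℝ u y (e3 i)) x (e3 i))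
            * ((φ x).re * (φ x).re + (φ x).im * (φ x).im)
          + (u x * fderiv ℝ u x (e3 i))
            * ((fderiv ℝ (fun y => (φ y).re) x (e3 i) * (φ x).re
                  + (φ x).re * fderiv ℝ (fun y => (φ y).re) x (e3 i))
               + (fderiv ℝ (fun y => (φ y).im) x (e3 i) * (φ x).im
                  + (φ x).im * fderiv ℝ (fun y => (φ y).im) x (e3 i))) := by
    intro i x
    rw [hhdef]
    rw [fderiv_mul_apply' (f := fun y => u y * fderiv ℝ u y (e3 i)) (hud.mul (hdud i)) hgd,
        fderiv_mul_apply' hud (hdud i), hgder]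
  -- pointwise identity
  have key_pt : ∀ x : V3,
      (1 / 2 : ℝ) * (∑ i, ‖fderiv ℝ (fun y => (u y : ℂ) * φ y) x (e3 i)‖ ^ 2)
          + W x * ((u x) ^ 2 * ‖φ x‖ ^ 2)
        = E * ((u x) ^ 2 * ‖φ x‖ ^ 2)
            + (1 / 2) * ((u x) ^ 2 * ∑ i, ‖fderiv ℝ φ x (e3 i)‖ ^ 2)
            + (1 / 2) * ∑ i, fderiv ℝ (h i) x (e3 i) := by
    intro x
    have hP := hPDE x
    simp only [lapR, Fin.sum_univ_three] at hP
    simp only [Fin.sum_univ_three]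
    rw [hnorm_uφ 0 x, hnorm_uφ 1 x, hnorm_uφ 2 x,
        hnorm_φ 0 x, hnorm_φ 1 x, hnorm_φ 2 x, hgnorm x,
        hhder 0 x, hhder 1 x, hhder 2 x]
    simp only [fderiv_mul_apply' hud hpd, fderiv_mul_apply' hud hqd]
    linear_combination (u x * ((φ x).re * (φ x).re + (φ x).im * (φ x).im)) * hP
  -- integrability
  have hnφs : HasCompactSupport (fun x : V3 => ‖φ x‖ ^ 2) := by
    have e : (fun x : V3 => ‖φ x‖ ^ 2) = (fun z : ℂ => ‖z‖ ^ 2) ∘ φ := rfl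
    rw [e]; exact hsupp.comp_left (by simp)
  have I1 : Integrable (fun x : V3 => ∑ i, ‖fderiv ℝ (fun y => (u y : ℂ) * φ y) x (e3 i)‖ ^ 2) := by
    have hc : Continuous fun x : V3 => fderiv ℝ (fun y => (u y : ℂ) * φ y) x :=
      hψc.continuous_fderiv one_ne_zero
    refine Continuous.integrable_of_hasCompactSupport ?_ ?_
    · exact continuous_finset_sum _ fun i _ =>
        (((ContinuousLinearMap.apply ℝ ℂ (e3 i)).continuous.comp hc).norm).pow 2
    · have hψs : HasCompactSupport (fun y => (u y : ℂ) * φ y) := hsupp.mul_left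
      have e : (fun x : V3 => ∑ i, ‖fderiv ℝ (fun y => (u y : ℂ) * φ y) x (e3 i)‖ ^ 2)
          = (fun L : V3 →L[ℝ] ℂ => ∑ i, ‖L (e3 i)‖ ^ 2) ∘ fderiv ℝ (fun y => (u y : ℂ) * φ y) :=
        rfl
      rw [e]; exact (hψs.fderiv ℝ).comp_left (by simp)
  have I3 : Integrable (fun x : V3 => (u x) ^ 2 * ‖φ x‖ ^ 2) := by
    refine Continuous.integrable_of_hasCompactSupport
      (((hu.continuous).pow 2).mul ((hφ.continuous.norm).pow 2)) ?_
    exact hnφs.mul_left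
  have I2 : Integrable (fun x : V3 => W x * ((u x) ^ 2 * ‖φ x‖ ^ 2)) := by
    refine Continuous.integrable_of_hasCompactSupport
      (hW.mul (((hu.continuous).pow 2).mul ((hφ.continuous.norm).pow 2))) ?_
    exact HasCompactSupport.mul_left hnφs.mul_left
  have I4 : Integrable (fun x : V3 => (u x) ^ 2 * ∑ i, ‖fderiv ℝ φ x (e3 i)‖ ^ 2) := by
    have hc : Continuous fun x : V3 => fderiv ℝ φ x := hφ.continuous_fderiv (by simp)
    refine Continuous.integrable_of_hasCompactSupport
      (((hu.continuous).pow 2).mul (continuous_finset_sum _ fun i _ =>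
        (((ContinuousLinearMap.apply ℝ ℂ (e3 i)).continuous.comp hc).norm).pow 2)) ?_
    refine HasCompactSupport.mul_left ?_
    have e : (fun x : V3 => ∑ i, ‖fderiv ℝ φ x (e3 i)‖ ^ 2)
        = (fun L : V3 →L[ℝ] ℂ => ∑ i, ‖L (e3 i)‖ ^ 2) ∘ fderiv ℝ φ := rfl
    rw [e]; exact (hsupp.fderiv ℝ).comp_left (by simp)
  have I5 : ∀ i : Fin 3, Integrable (fun x : V3 => fderiv ℝ (h i) x (e3 i)) := by
    intro i
    refine Continuous.integrable_of_hasCompactSupport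
      ((ContinuousLinearMap.apply ℝ ℝ (e3 i)).continuous.comp
        ((hhc i).continuous_fderiv one_ne_zero)) ?_
    exact (hhs i).fderiv_apply ℝ (e3 i)
  have I5s : Integrable (fun x : V3 => ∑ i, fderiv ℝ (h i) x (e3 i)) :=
    integrable_finset_sum _ fun i _ => I5 i
  -- assembly
  have HJ : ∫ x : V3, (∑ i, fderiv ℝ (h i) x (e3 i)) = 0 := by
    rw [integral_finset_sum _ fun i _ => I5 i]
    simp [key0]
  have lhs_eq : (1 / 2 : ℝ) * (∫ x : V3, ∑ i, ‖fderiv ℝ (fun y => (u y : ℂ) * φ y) x (e3 i)‖ ^ 2)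
        + (∫ x : V3, W x * ((u x) ^ 2 * ‖φ x‖ ^ 2))
      = ∫ x : V3, ((1 / 2 : ℝ) * (∑ i, ‖fderiv ℝ (fun y => (u y : ℂ) * φ y) x (e3 i)‖ ^ 2)
          + W x * ((u x) ^ 2 * ‖φ x‖ ^ 2)) := by
    rw [integral_add (I1.const_mul (1 / 2 : ℝ)) I2, integral_const_mul]
  have rhs_eq : E * (∫ x : V3, (u x) ^ 2 * ‖φ x‖ ^ 2)
        + (1 / 2 : ℝ) * (∫ x : V3, (u x) ^ 2 * ∑ i, ‖fderiv ℝ φ x (e3 i)‖ ^ 2)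
      = ∫ x : V3, (E * ((u x) ^ 2 * ‖φ x‖ ^ 2)
          + (1 / 2 : ℝ) * ((u x) ^ 2 * ∑ i, ‖fderiv ℝ φ x (e3 i)‖ ^ 2)) := by
    rw [integral_add (I3.const_mul E) (I4.const_mul (1 / 2 : ℝ)), integral_const_mul,
      integral_const_mul]
  rw [lhs_eq, rhs_eq]
  calc ∫ x : V3, ((1 / 2 : ℝ) * (∑ i, ‖fderiv ℝ (fun y => (u y : ℂ) * φ y) x (e3 i)‖ ^ 2)
          + W x * ((u x) ^ 2 * ‖φ x‖ ^ 2))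
      = ∫ x : V3, ((E * ((u x) ^ 2 * ‖φ x‖ ^ 2)
            + (1 / 2 : ℝ) * ((u x) ^ 2 * ∑ i, ‖fderiv ℝ φ x (e3 i)‖ ^ 2))
          + (1 / 2 : ℝ) * ∑ i, fderiv ℝ (h i) x (e3 i)) := by
        exact integral_congr_ae (Filter.Eventually.of_forall fun x => key_pt x)
    _ = (∫ x : V3, (E * ((u x) ^ 2 * ‖φ x‖ ^ 2)
            + (1 / 2 : ℝ) * ((u x) ^ 2 * ∑ i, ‖fderiv ℝ φ x (e3 i)‖ ^ 2)))
          + (1 / 2 : ℝ) * ∫ x : V3, (∑ i, fderiv ℝ (h i) x (e3 i)) := by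
        have IA : Integrable (fun x : V3 => E * ((u x) ^ 2 * ‖φ x‖ ^ 2)
            + (1 / 2 : ℝ) * ((u x) ^ 2 * ∑ i, ‖fderiv ℝ φ x (e3 i)‖ ^ 2)) :=
          (I3.const_mul E).add (I4.const_mul (1 / 2 : ℝ))
        rw [integral_add IA (I5s.const_mul (1 / 2 : ℝ)), integral_const_mul]
    _ = ∫ x : V3, (E * ((u x) ^ 2 * ‖φ x‖ ^ 2)
          + (1 / 2 : ℝ) * ((u x) ^ 2 * ∑ i, ‖fderiv ℝ φ x (e3 i)‖ ^ 2)) := by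
        rw [HJ]; ring
end
end

section
/- Let N ≥ 1, let W : ℝ³ → ℝ be continuous, and let u ∈ C²(ℝ³) be a strictly positive function, bounded together with its first and second derivatives, satisfying −(1/2)Δu + Wu = Eu on ℝ³ for some E ∈ ℝ. Define U(x₁,…,x_N) = ∏_{j=1}^N u(x_j). Then for every Φ ∈ C_c^∞(ℝ^{3N}, ℂ) one has ∑_{j=1}^N [ (1/2)∫_{ℝ^{3N}} |∇_{x_j}(UΦ)|² + ∫_{ℝ^{3N}} W(x_j) |UΦ|² ] = N·E ∫_{ℝ^{3N}} |UΦ|² + (1/2)∑_{j=1}^N ∫_{ℝ^{3N}} U² |∇_{x_j}Φ|². -/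
open MeasureTheory Filter Complex
open scoped RealInnerProductSpace ENNReal

noncomputable section

/-- Configuration space of `N` particles in `ℝ³`, i.e. `ℝ^{3N}` (with Lebesgue measure). -/
abbrev VN (N : ℕ) : Type := Fin N → V3

/-- The unit vector of `ℝ^{3N}` in the `i`-th coordinate direction of the `j`-th particle. -/
def eN (N : ℕ) (j : Fin N) (i : Fin 3) : VN N := Pi.single j (e3 i)

variable {N : ℕ}

/-- The product function `U`. -/
def Uu (u : V3 → ℝ) : VN N → ℝ := fun x => ∏ l, u (x l)

/-- product omitting the j-th factor -/
def Pju (u : V3 → ℝ) (j : Fin N) : VN N → ℝ := fun x => ∏ l ∈ Finset.univ.erase j, u (x l)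

lemma line_apply_same (x : VN N) (t : ℝ) (j : Fin N) (i : Fin 3) :
    (x + t • eN N j i) j = x j + t • e3 i := by
  simp [eN, Pi.single_eq_same]

lemma line_apply_ne (x : VN N) (t : ℝ) (j : Fin N) (i : Fin 3) {l : Fin N} (hl : l ≠ j) :
    (x + t • eN N j i) l = x l := by
  simp [eN, Pi.single_eq_of_ne hl]

lemma Pju_line (u : V3 → ℝ) (x : VN N) (t : ℝ) (j : Fin N) (i : Fin 3) :
    Pju u j (x + t • eN N j i) = Pju u j x := by
  unfold Pju
  refine Finset.prod_congr rfl fun l hl => ?_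
  rw [line_apply_ne x t j i (Finset.ne_of_mem_erase hl)]

lemma Uu_eq (u : V3 → ℝ) (j : Fin N) (x : VN N) : Uu u x = u (x j) * Pju u j x := by
  unfold Uu Pju
  exact (Finset.mul_prod_erase _ _ (Finset.mem_univ j)).symm

lemma Uu_line (u : V3 → ℝ) (x : VN N) (t : ℝ) (j : Fin N) (i : Fin 3) :
    Uu u (x + t • eN N j i) = u (x j + t • e3 i) * Pju u j x := by
  rw [Uu_eq u j, line_apply_same, Pju_line]

/-- directional derivative of `U` in direction `eN j i` -/
def dU (u : V3 → ℝ) (j : Fin N) (i : Fin 3) : VN N → ℝ :=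
  fun x => fderiv ℝ u (x j) (e3 i) * Pju u j x

def d2u (u : V3 → ℝ) (i : Fin 3) : V3 → ℝ := fun z => fderiv ℝ (fderiv ℝ u) z (e3 i) (e3 i)

def d2U (u : V3 → ℝ) (j : Fin N) (i : Fin 3) : VN N → ℝ :=
  fun x => d2u u i (x j) * Pju u j x

lemma hasDerivAt_pt_line (z : V3) (i : Fin 3) :
    HasDerivAt (fun t : ℝ => z + t • e3 i) (e3 i) 0 := by
  simpa using ((hasDerivAt_id (0 : ℝ)).smul_const (e3 i)).const_add z

lemma hasDerivAt_u_line {u : V3 → ℝ} (hu : Differentiable ℝ u) (z : V3) (i : Fin 3) :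
    HasDerivAt (fun t : ℝ => u (z + t • e3 i)) (fderiv ℝ u z (e3 i)) 0 := by
  have h0 : z + (0 : ℝ) • e3 i = z := by simp
  have hz : HasFDerivAt u (fderiv ℝ u z) (z + (0:ℝ) • e3 i) := by rw [h0]; exact (hu z).hasFDerivAt
  exact hz.comp_hasDerivAt 0 (hasDerivAt_pt_line z i)

lemma hasDerivAt_du_line {u : V3 → ℝ} (hu : ContDiff ℝ 2 u) (z : V3) (i : Fin 3) :
    HasDerivAt (fun t : ℝ => fderiv ℝ u (z + t • e3 i) (e3 i)) (d2u u i z) 0 := by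
  have hfd : Differentiable ℝ (fderiv ℝ u) :=
    (hu.fderiv_right (m := 1) (by norm_num)).differentiable (by norm_num)
  have hF : HasFDerivAt (fun y : V3 => fderiv ℝ u y (e3 i))
      ((ContinuousLinearMap.apply ℝ ℝ (e3 i)).comp (fderiv ℝ (fderiv ℝ u) z)) z :=
    (ContinuousLinearMap.apply ℝ ℝ (e3 i)).hasFDerivAt.comp z (hfd z).hasFDerivAt
  have h0 : z + (0 : ℝ) • e3 i = z := by simp
  rw [← h0] at hF
  have h := hF.comp_hasDerivAt 0 (hasDerivAt_pt_line z i)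
  simp only [zero_smul, add_zero] at h
  exact h

lemma fderiv_eq_of_line {G : Type*} [NormedAddCommGroup G] [NormedSpace ℝ G]
    {f : VN N → G} {a : G} {x v : VN N}
    (hf : DifferentiableAt ℝ f x) (h : HasLineDerivAt ℝ f a x v) : fderiv ℝ f x v = a := by
  rw [← hf.lineDeriv_eq_fderiv]; exact h.lineDeriv

lemma hasLineDerivAt_Uu {u : V3 → ℝ} (hu : Differentiable ℝ u) (j : Fin N) (i : Fin 3)
    (x : VN N) : HasLineDerivAt ℝ (Uu u) (dU u j i x) x (eN N j i) := by
  show HasDerivAt (fun t : ℝ => Uu u (x + t • eN N j i)) _ 0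
  have he : (fun t : ℝ => Uu u (x + t • eN N j i))
      = fun t => u (x j + t • e3 i) * Pju u j x := funext fun t => Uu_line u x t j i
  rw [he]
  exact (hasDerivAt_u_line hu (x j) i).mul_const _

lemma hasLineDerivAt_UdU {u : V3 → ℝ} (hu : ContDiff ℝ 2 u) (j : Fin N) (i : Fin 3)
    (x : VN N) : HasLineDerivAt ℝ (fun y => Uu u y * dU u j i y)
      (dU u j i x * dU u j i x + Uu u x * d2U u j i x) x (eN N j i) := by
  show HasDerivAt (fun t : ℝ => Uu u (x + t • eN N j i) * dU u j i (x + t • eN N j i)) _ 0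
  have he : (fun t : ℝ => Uu u (x + t • eN N j i) * dU u j i (x + t • eN N j i))
      = fun t => (u (x j + t • e3 i) * Pju u j x)
          * (fderiv ℝ u (x j + t • e3 i) (e3 i) * Pju u j x) := by
    funext t
    rw [Uu_line, dU, Pju_line, line_apply_same]
  rw [he]
  have h := ((hasDerivAt_u_line (hu.differentiable (by norm_num)) (x j) i).mul_const
      (Pju u j x)).mul ((hasDerivAt_du_line hu (x j) i).mul_const (Pju u j x))
  refine h.congr_deriv (Eq.symm ?_)
  rw [Uu_eq u j, dU, d2U]
  simp only [zero_smul, add_zero]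

lemma contDiff_Uu {u : V3 → ℝ} (hu : ContDiff ℝ 2 u) : ContDiff ℝ 2 (Uu u : VN N → ℝ) :=
  contDiff_prod fun l _ => hu.comp (ContinuousLinearMap.proj (R := ℝ) (φ := fun _ : Fin N => V3) l).contDiff

lemma cont_Pju {u : V3 → ℝ} (hu : Continuous u) (j : Fin N) : Continuous (Pju u j) :=
  continuous_finset_prod _ fun l _ => hu.comp (continuous_apply l)

lemma cont_dU {u : V3 → ℝ} (hu : ContDiff ℝ 2 u) (j : Fin N) (i : Fin 3) :
    Continuous (dU u j i : VN N → ℝ) := by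
  have h1 : Continuous (fderiv ℝ u) := hu.continuous_fderiv (by norm_num)
  exact ((h1.comp (continuous_apply j)).clm_apply continuous_const).mul
    (cont_Pju hu.continuous j)

lemma cont_d2U {u : V3 → ℝ} (hu : ContDiff ℝ 2 u) (j : Fin N) (i : Fin 3) :
    Continuous (d2U u j i : VN N → ℝ) := by
  have h1 : Continuous (fderiv ℝ (fderiv ℝ u)) :=
    (hu.fderiv_right (m := 1) (by norm_num)).continuous_fderiv (by norm_num)
  exact (((h1.comp (continuous_apply j)).clm_apply continuous_const).clm_apply
    continuous_const).mul (cont_Pju hu.continuous j)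

lemma fderiv_Uφ {u : V3 → ℝ} (hu : ContDiff ℝ 2 u) {φ : VN N → ℝ} (hφ : ContDiff ℝ (⊤ : ℕ∞) φ)
    (j : Fin N) (i : Fin 3) (x : VN N) :
    fderiv ℝ (fun y => Uu u y * φ y) x (eN N j i)
      = dU u j i x * φ x + Uu u x * fderiv ℝ φ x (eN N j i) := by
  have hUd : DifferentiableAt ℝ (Uu u) x :=
    ((contDiff_Uu hu).differentiable (by norm_num)).differentiableAt
  have hφd : DifferentiableAt ℝ φ x := (hφ.differentiable (by simp)).differentiableAt
  rw [fderiv_fun_mul hUd hφd]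
  simp only [ContinuousLinearMap.add_apply, ContinuousLinearMap.smul_apply, smul_eq_mul]
  rw [fderiv_eq_of_line hUd (hasLineDerivAt_Uu (hu.differentiable (by norm_num)) j i x)]
  ring

lemma hasLineDerivAt_sq {φ : VN N → ℝ} (hφ : ContDiff ℝ (⊤ : ℕ∞) φ) (x v : VN N) :
    HasLineDerivAt ℝ (fun y => φ y ^ 2) (2 * φ x * fderiv ℝ φ x v) x v := by
  have h : HasLineDerivAt ℝ φ (fderiv ℝ φ x v) x v :=
    ((hφ.differentiable (by simp)) x).hasFDerivAt.hasLineDerivAt v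
  have h2 := h.mul h
  show HasDerivAt (fun t : ℝ => φ (x + t • v) ^ 2) _ 0
  simp only [pow_two]
  refine h2.congr_deriv (Eq.symm ?_)
  simp only [zero_smul, add_zero]
  ring

instance instHaarVN (N : ℕ) : Measure.IsAddHaarMeasure (volume : Measure (VN N)) :=
  Measure.pi.isAddHaarMeasure _

lemma cc_integrable {h : VN N → ℝ} (hc : Continuous h) (hcs : HasCompactSupport h) :
    Integrable h (volume : Measure (VN N)) :=
  hc.integrable_of_hasCompactSupport hcs

lemma ibp {u : V3 → ℝ} (hu : ContDiff ℝ 2 u) {φ : VN N → ℝ} (hφ : ContDiff ℝ (⊤ : ℕ∞) φ)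
    (hsφ : HasCompactSupport φ) (j : Fin N) (i : Fin 3) :
    ∫ x : VN N, (Uu u x * dU u j i x) * (2 * φ x * fderiv ℝ φ x (eN N j i))
      = -∫ x : VN N, (dU u j i x * dU u j i x + Uu u x * d2U u j i x) * φ x ^ 2 := by
  have cφ : Continuous φ := hφ.continuous
  have cb : Continuous (fun x : VN N => fderiv ℝ φ x (eN N j i)) :=
    (hφ.continuous_fderiv (by simp)).clm_apply continuous_const
  have cU : Continuous (Uu u : VN N → ℝ) := (contDiff_Uu hu).continuous
  have hssq : HasCompactSupport (fun x : VN N => φ x ^ 2) :=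
    hsφ.comp_left (g := fun r : ℝ => r ^ 2) (by simp)
  have hsb : HasCompactSupport (fun x : VN N => fderiv ℝ φ x (eN N j i)) :=
    hsφ.fderiv_apply ℝ (eN N j i)
  have hsg' : HasCompactSupport (fun x : VN N => 2 * φ x * fderiv ℝ φ x (eN N j i)) :=
    HasCompactSupport.mul_left (f := fun x : VN N => 2 * φ x) hsb
  have int1 : Integrable (fun x : VN N =>
      (dU u j i x * dU u j i x + Uu u x * d2U u j i x) * φ x ^ 2) volume :=
    cc_integrable ((((cont_dU hu j i).mul (cont_dU hu j i)).add
      (cU.mul (cont_d2U hu j i))).mul (cφ.pow 2))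
      (HasCompactSupport.mul_left hssq)
  have int2 : Integrable (fun x : VN N =>
      (Uu u x * dU u j i x) * (2 * φ x * fderiv ℝ φ x (eN N j i))) volume :=
    cc_integrable ((cU.mul (cont_dU hu j i)).mul ((continuous_const.mul cφ).mul cb))
      (HasCompactSupport.mul_left hsg')
  have int3 : Integrable (fun x : VN N => (Uu u x * dU u j i x) * φ x ^ 2) volume :=
    cc_integrable ((cU.mul (cont_dU hu j i)).mul (cφ.pow 2))
      (HasCompactSupport.mul_left hssq)
  have := integral_bilinear_hasLineDerivAt_right_eq_neg_left_of_integrable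
    (μ := (volume : Measure (VN N))) (B := ContinuousLinearMap.mul ℝ ℝ)
    (f := fun x => Uu u x * dU u j i x)
    (f' := fun x => dU u j i x * dU u j i x + Uu u x * d2U u j i x)
    (g := fun x => φ x ^ 2) (g' := fun x => 2 * φ x * fderiv ℝ φ x (eN N j i))
    (v := eN N j i) (by simpa only [ContinuousLinearMap.mul_apply'] using int1)
    (by simpa [ContinuousLinearMap.mul_apply'] using int2)
    (by simpa [ContinuousLinearMap.mul_apply'] using int3)
    (fun x _ => hasLineDerivAt_UdU hu j i x) (fun x _ => hasLineDerivAt_sq hφ x (eN N j i))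
  simpa only [ContinuousLinearMap.mul_apply'] using this

lemma keyji {u : V3 → ℝ} (hu : ContDiff ℝ 2 u) {φ : VN N → ℝ} (hφ : ContDiff ℝ (⊤ : ℕ∞) φ)
    (hsφ : HasCompactSupport φ) (j : Fin N) (i : Fin 3) :
    ∫ x : VN N, fderiv ℝ (fun y => Uu u y * φ y) x (eN N j i) ^ 2
      = -(∫ x : VN N, Uu u x * d2U u j i x * φ x ^ 2)
        + ∫ x : VN N, Uu u x ^ 2 * fderiv ℝ φ x (eN N j i) ^ 2 := by
  have cφ : Continuous φ := hφ.continuous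
  have cb : Continuous (fun x : VN N => fderiv ℝ φ x (eN N j i)) :=
    (hφ.continuous_fderiv (by simp)).clm_apply continuous_const
  have cU : Continuous (Uu u : VN N → ℝ) := (contDiff_Uu hu).continuous
  have hssq : HasCompactSupport (fun x : VN N => φ x ^ 2) :=
    hsφ.comp_left (g := fun r : ℝ => r ^ 2) (by simp)
  have hsb : HasCompactSupport (fun x : VN N => fderiv ℝ φ x (eN N j i)) :=
    hsφ.fderiv_apply ℝ (eN N j i)
  have hsbsq : HasCompactSupport (fun x : VN N => fderiv ℝ φ x (eN N j i) ^ 2) :=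
    hsb.comp_left (g := fun r : ℝ => r ^ 2) (by simp)
  have intA : Integrable (fun x : VN N => dU u j i x * dU u j i x * φ x ^ 2) volume :=
    cc_integrable (((cont_dU hu j i).mul (cont_dU hu j i)).mul (cφ.pow 2))
      (HasCompactSupport.mul_left hssq)
  have intB : Integrable (fun x : VN N =>
      (Uu u x * dU u j i x) * (2 * φ x * fderiv ℝ φ x (eN N j i))) volume :=
    cc_integrable ((cU.mul (cont_dU hu j i)).mul ((continuous_const.mul cφ).mul cb))
      (HasCompactSupport.mul_left (HasCompactSupport.mul_left hsb))
  have intC : Integrable (fun x : VN N => Uu u x ^ 2 * fderiv ℝ φ x (eN N j i) ^ 2) volume :=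
    cc_integrable ((cU.pow 2).mul (cb.pow 2)) (HasCompactSupport.mul_left hsbsq)
  have intD : Integrable (fun x : VN N => Uu u x * d2U u j i x * φ x ^ 2) volume :=
    cc_integrable ((cU.mul (cont_d2U hu j i)).mul (cφ.pow 2))
      (HasCompactSupport.mul_left hssq)
  have hpt : ∀ x : VN N, fderiv ℝ (fun y => Uu u y * φ y) x (eN N j i) ^ 2
      = dU u j i x * dU u j i x * φ x ^ 2
        + ((Uu u x * dU u j i x) * (2 * φ x * fderiv ℝ φ x (eN N j i))
          + Uu u x ^ 2 * fderiv ℝ φ x (eN N j i) ^ 2) := by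
    intro x; rw [fderiv_Uφ hu hφ]; ring
  have intBC : Integrable (fun x : VN N =>
      (Uu u x * dU u j i x) * (2 * φ x * fderiv ℝ φ x (eN N j i))
        + Uu u x ^ 2 * fderiv ℝ φ x (eN N j i) ^ 2) volume := intB.add intC
  simp only [hpt]
  rw [integral_add intA intBC, integral_add intB intC, ibp hu hφ hsφ j i]
  have hsplit : (∫ x : VN N, (dU u j i x * dU u j i x + Uu u x * d2U u j i x) * φ x ^ 2)
      = (∫ x : VN N, dU u j i x * dU u j i x * φ x ^ 2)
        + ∫ x : VN N, Uu u x * d2U u j i x * φ x ^ 2 := by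
    rw [← integral_add intA intD]
    congr 1
    funext x
    ring
  rw [hsplit]
  ring

lemma d2u_eq {u : V3 → ℝ} (hu : ContDiff ℝ 2 u) (i : Fin 3) (z : V3) :
    fderiv ℝ (fun y => fderiv ℝ u y (e3 i)) z (e3 i) = d2u u i z := by
  have hfd : Differentiable ℝ (fderiv ℝ u) :=
    (hu.fderiv_right (m := 1) (by norm_num)).differentiable (by norm_num)
  have hF : HasFDerivAt (fun y : V3 => fderiv ℝ u y (e3 i))
      ((ContinuousLinearMap.apply ℝ ℝ (e3 i)).comp (fderiv ℝ (fderiv ℝ u) z)) z :=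
    (ContinuousLinearMap.apply ℝ ℝ (e3 i)).hasFDerivAt.comp z (hfd z).hasFDerivAt
  rw [hF.fderiv]
  rfl

lemma lapR_eq {u : V3 → ℝ} (hu : ContDiff ℝ 2 u) (z : V3) :
    lapR u z = ∑ i, d2u u i z :=
  Finset.sum_congr rfl fun i _ => d2u_eq hu i z

lemma real_master {u : V3 → ℝ} (hu : ContDiff ℝ 2 u) {W : V3 → ℝ} (hW : Continuous W)
    {E : ℝ} (hPDE : ∀ z : V3, -(1 / 2) * lapR u z + W z * u z = E * u z)
    {φ : VN N → ℝ} (hφ : ContDiff ℝ (⊤ : ℕ∞) φ) (hsφ : HasCompactSupport φ) (j : Fin N) :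
    (1 / 2) * (∫ x : VN N, ∑ i, fderiv ℝ (fun y => Uu u y * φ y) x (eN N j i) ^ 2)
        + ∫ x : VN N, W (x j) * (Uu u x * φ x) ^ 2
      = E * (∫ x : VN N, (Uu u x * φ x) ^ 2)
        + (1 / 2) * ∫ x : VN N, Uu u x ^ 2 * ∑ i, fderiv ℝ φ x (eN N j i) ^ 2 := by
  have cφ : Continuous φ := hφ.continuous
  have cU : Continuous (Uu u : VN N → ℝ) := (contDiff_Uu hu).continuous
  have cb : ∀ i : Fin 3, Continuous (fun x : VN N => fderiv ℝ φ x (eN N j i)) := fun i =>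
    (hφ.continuous_fderiv (by simp)).clm_apply continuous_const
  have hssq : HasCompactSupport (fun x : VN N => φ x ^ 2) :=
    hsφ.comp_left (g := fun r : ℝ => r ^ 2) (by simp)
  have cUφ : ContDiff ℝ 2 (fun y : VN N => Uu u y * φ y) :=
    (contDiff_Uu hu).mul (hφ.of_le (WithTop.coe_le_coe.mpr le_top))
  have hsUφ : HasCompactSupport (fun y : VN N => Uu u y * φ y) :=
    HasCompactSupport.mul_left hsφ
  have hsUφsq : HasCompactSupport (fun y : VN N => (Uu u y * φ y) ^ 2) :=
    hsUφ.comp_left (g := fun r : ℝ => r ^ 2) (by simp)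
  have intI : ∀ i : Fin 3, Integrable
      (fun x : VN N => fderiv ℝ (fun y => Uu u y * φ y) x (eN N j i) ^ 2) volume := by
    intro i
    refine cc_integrable (((cUφ.continuous_fderiv (by norm_num)).clm_apply
      continuous_const).pow 2) ?_
    exact (hsUφ.fderiv_apply ℝ (eN N j i)).comp_left (g := fun r : ℝ => r ^ 2) (by simp)
  have intD : ∀ i : Fin 3, Integrable
      (fun x : VN N => Uu u x * d2U u j i x * φ x ^ 2) volume := fun i =>
    cc_integrable ((cU.mul (cont_d2U hu j i)).mul (cφ.pow 2))
      (HasCompactSupport.mul_left hssq)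
  have intC : ∀ i : Fin 3, Integrable
      (fun x : VN N => Uu u x ^ 2 * fderiv ℝ φ x (eN N j i) ^ 2) volume := fun i =>
    cc_integrable ((cU.pow 2).mul ((cb i).pow 2))
      (HasCompactSupport.mul_left ((hsφ.fderiv_apply ℝ (eN N j i)).comp_left
        (g := fun r : ℝ => r ^ 2) (by simp)))
  have intW : Integrable (fun x : VN N => W (x j) * (Uu u x * φ x) ^ 2) volume :=
    cc_integrable ((hW.comp (continuous_apply j)).mul ((cU.mul cφ).pow 2))
      (HasCompactSupport.mul_left hsUφsq)
  have intLap : Integrable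
      (fun x : VN N => Uu u x * (lapR u (x j) * Pju u j x) * φ x ^ 2) volume := by
    have clap : Continuous fun x : VN N => lapR u (x j) := by
      have : Continuous (lapR u) := by
        have : ∀ z, lapR u z = ∑ i, d2u u i z := lapR_eq hu
        rw [funext this]
        refine continuous_finset_sum _ fun i _ => ?_
        have h1 : Continuous (fderiv ℝ (fderiv ℝ u)) :=
          (hu.fderiv_right (m := 1) (by norm_num)).continuous_fderiv (by norm_num)
        exact ((h1.clm_apply continuous_const).clm_apply continuous_const)
      exact this.comp (continuous_apply j)
    exact cc_integrable ((cU.mul (clap.mul (cont_Pju hu.continuous j))).mul (cφ.pow 2))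
      (HasCompactSupport.mul_left hssq)
  -- step 1: expand the gradient-square integral
  have step1 : (∫ x : VN N, ∑ i, fderiv ℝ (fun y => Uu u y * φ y) x (eN N j i) ^ 2)
      = ∑ i : Fin 3, ((-(∫ x : VN N, Uu u x * d2U u j i x * φ x ^ 2))
          + ∫ x : VN N, Uu u x ^ 2 * fderiv ℝ φ x (eN N j i) ^ 2) := by
    rw [integral_finset_sum _ fun i _ => intI i]
    exact Finset.sum_congr rfl fun i _ => keyji hu hφ hsφ j i
  -- step 2: sum of second-derivative terms is the Laplacian term
  have step2 : (∑ i : Fin 3, ∫ x : VN N, Uu u x * d2U u j i x * φ x ^ 2)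
      = ∫ x : VN N, Uu u x * (lapR u (x j) * Pju u j x) * φ x ^ 2 := by
    rw [← integral_finset_sum _ fun i _ => intD i]
    congr 1
    funext x
    rw [lapR_eq hu (x j)]
    simp only [d2U, Finset.sum_mul, Finset.mul_sum]
  -- step 3: PDE substitution
  have step3 : (∫ x : VN N, W (x j) * (Uu u x * φ x) ^ 2)
      - (1 / 2) * (∫ x : VN N, Uu u x * (lapR u (x j) * Pju u j x) * φ x ^ 2)
      = E * ∫ x : VN N, (Uu u x * φ x) ^ 2 := by
    rw [← integral_const_mul, ← integral_const_mul, ← integral_sub intW (intLap.const_mul _)]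
    congr 1
    funext x
    have h := hPDE (x j)
    rw [Uu_eq u j x]
    linear_combination (u (x j) * Pju u j x ^ 2 * φ x ^ 2) * h
  -- step 4: second sum
  have step4 : (∫ x : VN N, Uu u x ^ 2 * ∑ i, fderiv ℝ φ x (eN N j i) ^ 2)
      = ∑ i : Fin 3, ∫ x : VN N, Uu u x ^ 2 * fderiv ℝ φ x (eN N j i) ^ 2 := by
    rw [← integral_finset_sum _ fun i _ => intC i]
    congr 1
    funext x
    rw [Finset.mul_sum]
  rw [step1, step4, Finset.sum_add_distrib, Finset.sum_neg_distrib, step2]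
  linear_combination step3

lemma normsq_c (z : ℂ) : ‖z‖ ^ 2 = z.re ^ 2 + z.im ^ 2 := by
  rw [Complex.sq_norm, Complex.normSq_apply]
  ring

lemma fderiv_re_comp {f : VN N → ℂ} {x : VN N} (hf : DifferentiableAt ℝ f x) (v : VN N) :
    fderiv ℝ (fun y => (f y).re) x v = (fderiv ℝ f x v).re := by
  have h : HasFDerivAt (fun y => (f y).re) (Complex.reCLM.comp (fderiv ℝ f x)) x :=
    Complex.reCLM.hasFDerivAt.comp x hf.hasFDerivAt
  rw [h.fderiv]
  rfl

lemma fderiv_im_comp {f : VN N → ℂ} {x : VN N} (hf : DifferentiableAt ℝ f x) (v : VN N) :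
    fderiv ℝ (fun y => (f y).im) x v = (fderiv ℝ f x v).im := by
  have h : HasFDerivAt (fun y => (f y).im) (Complex.imCLM.comp (fderiv ℝ f x)) x :=
    Complex.imCLM.hasFDerivAt.comp x hf.hasFDerivAt
  rw [h.fderiv]
  rfl

lemma intI_gen {u : V3 → ℝ} (hu : ContDiff ℝ 2 u) {φ : VN N → ℝ} (hφ : ContDiff ℝ (⊤ : ℕ∞) φ)
    (hsφ : HasCompactSupport φ) (j : Fin N) (i : Fin 3) :
    Integrable (fun x : VN N => fderiv ℝ (fun y => Uu u y * φ y) x (eN N j i) ^ 2) volume := by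
  have cUφ : ContDiff ℝ 2 (fun y : VN N => Uu u y * φ y) :=
    (contDiff_Uu hu).mul (hφ.of_le (WithTop.coe_le_coe.mpr le_top))
  have hsUφ : HasCompactSupport (fun y : VN N => Uu u y * φ y) :=
    HasCompactSupport.mul_left hsφ
  refine cc_integrable (((cUφ.continuous_fderiv (by norm_num)).clm_apply
    continuous_const).pow 2) ?_
  exact (hsUφ.fderiv_apply ℝ (eN N j i)).comp_left (g := fun r : ℝ => r ^ 2) (by simp)

lemma intC_gen {u : V3 → ℝ} (hu : ContDiff ℝ 2 u) {φ : VN N → ℝ} (hφ : ContDiff ℝ (⊤ : ℕ∞) φ)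
    (hsφ : HasCompactSupport φ) (j : Fin N) (i : Fin 3) :
    Integrable (fun x : VN N => Uu u x ^ 2 * fderiv ℝ φ x (eN N j i) ^ 2) volume := by
  have cU : Continuous (Uu u : VN N → ℝ) := (contDiff_Uu hu).continuous
  have cb : Continuous (fun x : VN N => fderiv ℝ φ x (eN N j i)) :=
    (hφ.continuous_fderiv (by simp)).clm_apply continuous_const
  exact cc_integrable ((cU.pow 2).mul (cb.pow 2))
    (HasCompactSupport.mul_left ((hsφ.fderiv_apply ℝ (eN N j i)).comp_left
      (g := fun r : ℝ => r ^ 2) (by simp)))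

lemma intW_gen {u : V3 → ℝ} (hu : ContDiff ℝ 2 u) {W : V3 → ℝ} (hW : Continuous W)
    {φ : VN N → ℝ} (hφ : ContDiff ℝ (⊤ : ℕ∞) φ) (hsφ : HasCompactSupport φ) (j : Fin N) :
    Integrable (fun x : VN N => W (x j) * (Uu u x * φ x) ^ 2) volume := by
  have cU : Continuous (Uu u : VN N → ℝ) := (contDiff_Uu hu).continuous
  exact cc_integrable ((hW.comp (continuous_apply j)).mul ((cU.mul hφ.continuous).pow 2))
    (HasCompactSupport.mul_left ((HasCompactSupport.mul_left (f := Uu u) hsφ).comp_left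
      (g := fun r : ℝ => r ^ 2) (by simp)))

lemma intSq_gen {u : V3 → ℝ} (hu : ContDiff ℝ 2 u) {φ : VN N → ℝ} (hφ : ContDiff ℝ (⊤ : ℕ∞) φ)
    (hsφ : HasCompactSupport φ) :
    Integrable (fun x : VN N => (Uu u x * φ x) ^ 2) volume := by
  have cU : Continuous (Uu u : VN N → ℝ) := (contDiff_Uu hu).continuous
  exact cc_integrable ((cU.mul hφ.continuous).pow 2)
    ((HasCompactSupport.mul_left (f := Uu u) hsφ).comp_left (g := fun r : ℝ => r ^ 2) (by simp))

lemma complex_master {u : V3 → ℝ} (hu : ContDiff ℝ 2 u) {W : V3 → ℝ} (hW : Continuous W)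
    {E : ℝ} (hPDE : ∀ z : V3, -(1 / 2) * lapR u z + W z * u z = E * u z)
    {Φ : VN N → ℂ} (hΦ : ContDiff ℝ (⊤ : ℕ∞) Φ) (hsupp : HasCompactSupport Φ) (j : Fin N) :
    (1 / 2) * (∫ x : VN N, ∑ i, ‖fderiv ℝ (fun y => ((Uu u y : ℝ) : ℂ) * Φ y) x (eN N j i)‖ ^ 2)
        + ∫ x : VN N, W (x j) * ‖((Uu u x : ℝ) : ℂ) * Φ x‖ ^ 2
      = E * (∫ x : VN N, ‖((Uu u x : ℝ) : ℂ) * Φ x‖ ^ 2)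
        + (1 / 2) * ∫ x : VN N, Uu u x ^ 2 * ∑ i, ‖fderiv ℝ Φ x (eN N j i)‖ ^ 2 := by
  set φr : VN N → ℝ := fun x => (Φ x).re with hφr_def
  set φi : VN N → ℝ := fun x => (Φ x).im with hφi_def
  have hφr : ContDiff ℝ (⊤ : ℕ∞) φr := Complex.reCLM.contDiff.comp hΦ
  have hφi : ContDiff ℝ (⊤ : ℕ∞) φi := Complex.imCLM.contDiff.comp hΦ
  have hsr : HasCompactSupport φr := hsupp.comp_left (g := Complex.re) (by simp)
  have hsi : HasCompactSupport φi := hsupp.comp_left (g := Complex.im) (by simp)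
  have hFc : ContDiff ℝ 2 (fun y : VN N => ((Uu u y : ℝ) : ℂ) * Φ y) :=
    (Complex.ofRealCLM.contDiff.comp (contDiff_Uu hu)).mul (hΦ.of_le (WithTop.coe_le_coe.mpr le_top))
  have hre : (fun y : VN N => Uu u y * φr y)
      = fun y => ((fun z : VN N => ((Uu u z : ℝ) : ℂ) * Φ z) y).re :=
    funext fun y => by simp [hφr_def, Complex.mul_re]
  have him : (fun y : VN N => Uu u y * φi y)
      = fun y => ((fun z : VN N => ((Uu u z : ℝ) : ℂ) * Φ z) y).im :=
    funext fun y => by simp [hφi_def, Complex.mul_im]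
  have P1 : ∀ x : VN N, ‖((Uu u x : ℝ) : ℂ) * Φ x‖ ^ 2
      = (Uu u x * φr x) ^ 2 + (Uu u x * φi x) ^ 2 := by
    intro x
    rw [normsq_c]
    congr 1 <;> [skip; skip] <;> congr 1 <;> simp [hφr_def, hφi_def, Complex.mul_re, Complex.mul_im]
  have P3 : ∀ (x : VN N) (v : VN N), ‖fderiv ℝ (fun y : VN N => ((Uu u y : ℝ) : ℂ) * Φ y) x v‖ ^ 2
      = fderiv ℝ (fun y => Uu u y * φr y) x v ^ 2 + fderiv ℝ (fun y => Uu u y * φi y) x v ^ 2 := by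
    intro x v
    rw [normsq_c, hre, him,
      fderiv_re_comp ((hFc.differentiable (by norm_num)).differentiableAt) v,
      fderiv_im_comp ((hFc.differentiable (by norm_num)).differentiableAt) v]
  have P4 : ∀ (x : VN N) (v : VN N), ‖fderiv ℝ Φ x v‖ ^ 2
      = fderiv ℝ φr x v ^ 2 + fderiv ℝ φi x v ^ 2 := by
    intro x v
    rw [normsq_c, hφr_def, hφi_def,
      fderiv_re_comp ((hΦ.differentiable (by simp)).differentiableAt) v,
      fderiv_im_comp ((hΦ.differentiable (by simp)).differentiableAt) v]
  simp only [P1, P3, P4]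
  -- split everything into real and imaginary parts
  have S1 : (∫ x : VN N, ∑ i, (fderiv ℝ (fun y => Uu u y * φr y) x (eN N j i) ^ 2
        + fderiv ℝ (fun y => Uu u y * φi y) x (eN N j i) ^ 2))
      = (∫ x : VN N, ∑ i, fderiv ℝ (fun y => Uu u y * φr y) x (eN N j i) ^ 2)
        + ∫ x : VN N, ∑ i, fderiv ℝ (fun y => Uu u y * φi y) x (eN N j i) ^ 2 := by
    rw [← integral_add (integrable_finset_sum _ fun i _ => intI_gen hu hφr hsr j i)
      (integrable_finset_sum _ fun i _ => intI_gen hu hφi hsi j i)]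
    congr 1
    funext x
    rw [← Finset.sum_add_distrib]
  have S2 : (∫ x : VN N, W (x j) * ((Uu u x * φr x) ^ 2 + (Uu u x * φi x) ^ 2))
      = (∫ x : VN N, W (x j) * (Uu u x * φr x) ^ 2)
        + ∫ x : VN N, W (x j) * (Uu u x * φi x) ^ 2 := by
    rw [← integral_add (intW_gen hu hW hφr hsr j) (intW_gen hu hW hφi hsi j)]
    congr 1
    funext x
    ring
  have S3 : (∫ x : VN N, ((Uu u x * φr x) ^ 2 + (Uu u x * φi x) ^ 2))
      = (∫ x : VN N, (Uu u x * φr x) ^ 2) + ∫ x : VN N, (Uu u x * φi x) ^ 2 :=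
    integral_add (intSq_gen hu hφr hsr) (intSq_gen hu hφi hsi)
  have S4 : (∫ x : VN N, Uu u x ^ 2 * ∑ i, (fderiv ℝ φr x (eN N j i) ^ 2
        + fderiv ℝ φi x (eN N j i) ^ 2))
      = (∫ x : VN N, Uu u x ^ 2 * ∑ i, fderiv ℝ φr x (eN N j i) ^ 2)
        + ∫ x : VN N, Uu u x ^ 2 * ∑ i, fderiv ℝ φi x (eN N j i) ^ 2 := by
    have h1 : Integrable (fun x : VN N => Uu u x ^ 2 * ∑ i, fderiv ℝ φr x (eN N j i) ^ 2)
        volume := by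
      have he : (fun x : VN N => Uu u x ^ 2 * ∑ i, fderiv ℝ φr x (eN N j i) ^ 2)
          = fun x => ∑ i, Uu u x ^ 2 * fderiv ℝ φr x (eN N j i) ^ 2 :=
        funext fun x => Finset.mul_sum _ _ _
      rw [he]
      exact integrable_finset_sum _ fun i _ => intC_gen hu hφr hsr j i
    have h2 : Integrable (fun x : VN N => Uu u x ^ 2 * ∑ i, fderiv ℝ φi x (eN N j i) ^ 2)
        volume := by
      have he : (fun x : VN N => Uu u x ^ 2 * ∑ i, fderiv ℝ φi x (eN N j i) ^ 2)
          = fun x => ∑ i, Uu u x ^ 2 * fderiv ℝ φi x (eN N j i) ^ 2 :=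
        funext fun x => Finset.mul_sum _ _ _
      rw [he]
      exact integrable_finset_sum _ fun i _ => intC_gen hu hφi hsi j i
    rw [← integral_add h1 h2]
    congr 1
    funext x
    rw [← mul_add, ← Finset.sum_add_distrib]
  rw [S1, S2, S3, S4]
  linear_combination (real_master hu hW hPDE hφr hsr j) + (real_master hu hW hPDE hφi hsi j)


/-- N-body energy decoupling: if `u > 0` is a bounded `C²` solution (with
bounded first and second derivatives) of `-(1/2)Δu + Wu = Eu` with `W` continuous, and
`U(x₁,…,x_N) = ∏_j u(x_j)`, then for every smooth compactly supported `Φ` on `ℝ^{3N}`,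
`∑_j [(1/2)∫|∇_{x_j}(UΦ)|² + ∫ W(x_j)|UΦ|²] = N·E·∫|UΦ|² + (1/2)∑_j ∫ U²|∇_{x_j}Φ|²`. -/
theorem energy_decoupling_N (N : ℕ) (hN : 1 ≤ N) (W : V3 → ℝ) (hW : Continuous W)
    (u : V3 → ℝ) (hu : ContDiff ℝ 2 u) (hpos : ∀ x, 0 < u x)
    (hbound : ∃ C : ℝ, ∀ x : V3,
      |u x| ≤ C ∧ ‖fderiv ℝ u x‖ ≤ C ∧ ‖fderiv ℝ (fderiv ℝ u) x‖ ≤ C)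
    (E : ℝ) (hPDE : ∀ x : V3, -(1 / 2) * lapR u x + W x * u x = E * u x)
    (Φ : VN N → ℂ) (hΦ : ContDiff ℝ (⊤ : ℕ∞) Φ) (hsupp : HasCompactSupport Φ) :
    (∑ j : Fin N,
        ((1 / 2) *
            (∫ x : VN N, ∑ i, ‖fderiv ℝ
              (fun y : VN N => ((∏ l, u (y l) : ℝ) : ℂ) * Φ y) x (eN N j i)‖ ^ 2) +
          ∫ x : VN N, W (x j) * ‖((∏ l, u (x l) : ℝ) : ℂ) * Φ x‖ ^ 2))
      = (N : ℝ) * E * (∫ x : VN N, ‖((∏ l, u (x l) : ℝ) : ℂ) * Φ x‖ ^ 2) +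
        (1 / 2) * ∑ j : Fin N,
          ∫ x : VN N, (∏ l, u (x l)) ^ 2 * ∑ i, ‖fderiv ℝ Φ x (eN N j i)‖ ^ 2 := by
  have hprod : ∀ x : VN N, (∏ l, u (x l)) = Uu u x := fun _ => rfl
  simp only [hprod]
  rw [Finset.sum_congr rfl fun j _ => complex_master hu hW hPDE hΦ hsupp j]
  rw [Finset.sum_add_distrib, Finset.sum_const, Finset.card_univ, Fintype.card_fin,
    nsmul_eq_mul, ← Finset.mul_sum]
  ring
end
end

section
/- Let C be an n×n Hermitian complex matrix, let Π_C = 𝟙_{(−∞,0)}(C) be the spectral projection of C onto the span of its eigenvectors with negative eigenvalues, and let |C| = √(C²) = √(C*C). Then for every n×n orthogonal projection matrix Π (i.e. Π = Π* = Π²) one has Tr( C(Π − Π_C) ) = Tr( |C| (Π − Π_C)² ). -/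
/-!
Write `A = |C|` and `N = Π_C`. Conjugating by the eigenvector unitary of `C` turns `C`, `A`, `N`
into diagonal matrices, which shows that `N` is idempotent, commutes with `A`, and
`C = A (1 - 2N)`. With `Π² = Π`, `N² = N` and the cyclicity of the trace (which turns
`Tr(AΠN)` into `Tr(NAΠ) = Tr(ANΠ)`), both sides expand to `Tr(AΠ) - 2 Tr(ANΠ) + Tr(AN)`.
-/

open Matrix

noncomputable section

variable {n : ℕ}

/-- The spectral projection `𝟙_{(-∞,0)}(C)` of a Hermitian matrix `C` onto the span of its
eigenvectors with negative eigenvalues, i.e. `∑_{i : λ_i < 0} |v_i⟩⟨v_i|`. -/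
def negProj {C : Matrix (Fin n) (Fin n) ℂ} (hC : C.IsHermitian) : Matrix (Fin n) (Fin n) ℂ :=
  (hC.eigenvectorUnitary : Matrix (Fin n) (Fin n) ℂ) *
    Matrix.diagonal (fun i => if hC.eigenvalues i < 0 then (1 : ℂ) else 0) *
    star (hC.eigenvectorUnitary : Matrix (Fin n) (Fin n) ℂ)

/-- The absolute value `|C| = √(C*C) = ∑_i |λ_i| |v_i⟩⟨v_i|` of a Hermitian matrix `C`. -/
def absMat {C : Matrix (Fin n) (Fin n) ℂ} (hC : C.IsHermitian) : Matrix (Fin n) (Fin n) ℂ :=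
  (hC.eigenvectorUnitary : Matrix (Fin n) (Fin n) ℂ) *
    Matrix.diagonal (fun i => ((|hC.eigenvalues i| : ℝ) : ℂ)) *
    star (hC.eigenvectorUnitary : Matrix (Fin n) (Fin n) ℂ)

namespace Matrix

theorem trace_mul_sub_eq_trace_mul_sub_sq {ι R : Type*} [Fintype ι] [DecidableEq ι] [CommRing R]
    {C A N P : Matrix ι ι R} (hCAN : C = A * (1 - 2 • N)) (hAN : Commute A N)
    (hN : IsIdempotentElem N) (hP : IsIdempotentElem P) :
    (C * (P - N)).trace = (A * ((P - N) * (P - N))).trace := by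
  have hPN : (A * P * N).trace = (A * N * P).trace := by
    rw [trace_mul_cycle, hAN.eq]
  have hlhs : C * (P - N) = A * P - 2 • (A * N * P) - A * N + 2 • (A * (N * N)) := by
    rw [hCAN]; noncomm_ring
  have hrhs : A * ((P - N) * (P - N)) = A * (P * P) - A * P * N - A * N * P + A * (N * N) := by
    noncomm_ring
  rw [hlhs, hrhs, hP.eq, hN.eq]
  simp only [trace_add, trace_sub, trace_smul, hPN]
  abel

end Matrix

section NegProjAbsMat

open Unitary

variable {C : Matrix (Fin n) (Fin n) ℂ} (hC : C.IsHermitian)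

theorem negProj_eq_conjStarAlgAut :
    negProj hC = conjStarAlgAut ℂ _ hC.eigenvectorUnitary
      (diagonal fun i => if hC.eigenvalues i < 0 then 1 else 0) := rfl

theorem absMat_eq_conjStarAlgAut :
    absMat hC = conjStarAlgAut ℂ _ hC.eigenvectorUnitary
      (diagonal fun i => ((|hC.eigenvalues i| : ℝ) : ℂ)) := rfl

theorem isIdempotentElem_negProj : IsIdempotentElem (negProj hC) := by
  rw [negProj_eq_conjStarAlgAut]
  refine IsIdempotentElem.map ?_ _
  rw [IsIdempotentElem, diagonal_mul_diagonal]
  congr 1 with i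
  split_ifs <;> simp

theorem commute_absMat_negProj : Commute (absMat hC) (negProj hC) := by
  rw [negProj_eq_conjStarAlgAut, absMat_eq_conjStarAlgAut]
  exact (commute_diagonal _ _).map _

theorem absMat_mul_one_sub_two_smul_negProj : absMat hC * (1 - 2 • negProj hC) = C := by
  conv_rhs => rw [hC.spectral_theorem]
  rw [negProj_eq_conjStarAlgAut, absMat_eq_conjStarAlgAut,
    ← map_one (conjStarAlgAut ℂ _ hC.eigenvectorUnitary), ← map_nsmul, ← map_sub, ← map_mul]
  congr 1
  rw [← diagonal_one, ← diagonal_smul, diagonal_sub, diagonal_mul_diagonal]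
  congr 1 with i
  simp only [Pi.smul_apply, Function.comp_apply]
  split_ifs with hneg
  · simp only [abs_of_neg hneg, Complex.ofReal_neg, nsmul_eq_mul, Nat.cast_ofNat, mul_one,
      Complex.coe_algebraMap]
    ring
  · simp [abs_of_nonneg (not_lt.mp hneg)]

end NegProjAbsMat

theorem trace_identity_proj_general (C : Matrix (Fin n) (Fin n) ℂ) (hC : C.IsHermitian)
    (P : Matrix (Fin n) (Fin n) ℂ) (hP_idem : P * P = P) :
    (C * (P - negProj hC)).trace
      = (absMat hC * ((P - negProj hC) * (P - negProj hC))).trace :=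
  trace_mul_sub_eq_trace_mul_sub_sq (absMat_mul_one_sub_two_smul_negProj hC).symm
    (commute_absMat_negProj hC) (isIdempotentElem_negProj hC) hP_idem

/-- for a Hermitian matrix `C` and any orthogonal projection matrix `Π`,
`Tr(C(Π - Π_C)) = Tr(|C| (Π - Π_C)²)` where `Π_C = 𝟙_{(-∞,0)}(C)`. -/
theorem trace_identity_proj (C : Matrix (Fin n) (Fin n) ℂ) (hC : C.IsHermitian)
    (P : Matrix (Fin n) (Fin n) ℂ) (hP_sa : Pᴴ = P) (hP_idem : P * P = P) :
    (C * (P - negProj hC)).trace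
      = (absMat hC * ((P - negProj hC) * (P - negProj hC))).trace :=
  trace_identity_proj_general C hC P hP_idem
end
end

section
/- Let C be an invertible n×n Hermitian complex matrix and let Π_C = 𝟙_{(−∞,0)}(C) be the spectral projection of C onto the span of its eigenvectors with negative eigenvalues. Then for every n×n orthogonal projection matrix Π (i.e. Π = Π* = Π²) one has Tr(CΠ) ≥ Tr(CΠ_C), with equality if and only if Π = Π_C. -/
/-! Conjugating by the eigenvector unitary `U` of `C` turns `Tr(CΠ)` into `∑ λᵢ qᵢ`, where the
`qᵢ` are the diagonal entries of the projection `Q = U⋆ΠU`; as `qᵢ = ∑ₖ |Q_{ki}|²` and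
`1 - qᵢ` is the diagonal entry of the projection `1 - Q`, each `qᵢ` lies in `[0, 1]`. Hence
`λᵢ qᵢ ≥ λᵢ 𝟙(λᵢ < 0)` termwise. Since no `λᵢ` vanishes, equality forces `qᵢ = 𝟙(λᵢ < 0)`, and a
projection whose `i`-th diagonal entry is `0` (resp. `1`) has `i`-th column `0` (resp. `eᵢ`), so
`Q = diag 𝟙(λ < 0) = U⋆Π_C U`. -/

open Matrix

noncomputable section

variable {n : ℕ}

namespace Matrix

variable {𝕜 ι : Type*} [RCLike 𝕜] [Fintype ι]

open RCLike

theorem IsHermitian.re_apply_self_eq_sum_norm_sq {R : Matrix ι ι 𝕜} (hR : R.IsHermitian)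
    (hR2 : IsIdempotentElem R) (j : ι) : re (R j j) = ∑ k, ‖R k j‖ ^ 2 := by
  have : R j j = (Rᴴ * R) j j := by rw [hR.eq, hR2.eq]
  rw [this, mul_apply, map_sum]
  refine Finset.sum_congr rfl fun k _ => ?_
  rw [conjTranspose_apply, star_def, RCLike.conj_mul, ← ofReal_pow, ofReal_re]

theorem IsHermitian.apply_eq_zero_of_re_apply_self_eq_zero {R : Matrix ι ι 𝕜}
    (hR : R.IsHermitian) (hR2 : IsIdempotentElem R) {j : ι} (hj : re (R j j) = 0) (k : ι) :
    R k j = 0 := by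
  rw [hR.re_apply_self_eq_sum_norm_sq hR2,
    Finset.sum_eq_zero_iff_of_nonneg fun _ _ => by positivity] at hj
  simpa using hj k (Finset.mem_univ k)

theorem IsHermitian.re_apply_self_nonneg {R : Matrix ι ι 𝕜} (hR : R.IsHermitian)
    (hR2 : IsIdempotentElem R) (j : ι) : 0 ≤ re (R j j) := by
  rw [hR.re_apply_self_eq_sum_norm_sq hR2]
  positivity

variable [DecidableEq ι]

theorem IsHermitian.re_apply_self_le_one {R : Matrix ι ι 𝕜} (hR : R.IsHermitian)
    (hR2 : IsIdempotentElem R) (j : ι) : re (R j j) ≤ 1 := by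
  have := (isHermitian_one.sub hR).re_apply_self_nonneg hR2.one_sub j
  simpa using this

theorem IsHermitian.eq_diagonal_of_re_apply_self_eq_zero_or_one {R : Matrix ι ι 𝕜}
    (hR : R.IsHermitian) (hR2 : IsIdempotentElem R) (h : ∀ i, re (R i i) = 0 ∨ re (R i i) = 1) :
    R = diagonal fun i => (re (R i i) : 𝕜) := by
  ext k j
  obtain rfl | hkj := eq_or_ne k j
  · simp [hR.coe_re_apply_self]
  rw [diagonal_apply_ne _ hkj]
  rcases h j with h0 | h1
  · exact hR.apply_eq_zero_of_re_apply_self_eq_zero hR2 h0 k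
  · have := (isHermitian_one.sub hR).apply_eq_zero_of_re_apply_self_eq_zero hR2.one_sub
      (j := j) (by simp [h1]) k
    simpa [one_apply_ne hkj] using this

theorem IsHermitian.eigenvalues_ne_zero_of_isUnit {C : Matrix ι ι 𝕜} (hC : C.IsHermitian)
    (hinv : IsUnit C) (i : ι) : hC.eigenvalues i ≠ 0 := by
  have hdet := ((isUnit_iff_isUnit_det C).mp hinv).ne_zero
  rw [hC.det_eq_prod_eigenvalues] at hdet
  exact_mod_cast Finset.prod_ne_zero_iff.mp hdet i (Finset.mem_univ i)

theorem IsHermitian.trace_mul_eq_sum_eigenvalues_mul {C : Matrix ι ι 𝕜} (hC : C.IsHermitian)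
    (X : Matrix ι ι 𝕜) :
    (C * X).trace = ∑ i, (hC.eigenvalues i : 𝕜) *
      (star (hC.eigenvectorUnitary : Matrix ι ι 𝕜) * X * hC.eigenvectorUnitary) i i := by
  conv_lhs => rw [hC.spectral_theorem]
  simp only [Unitary.conjStarAlgAut_apply]
  rw [trace_mul_cycle, ← mul_assoc, trace_mul_cycle, ← mul_assoc]
  simp [trace, mul_diagonal, mul_comm]

end Matrix

theorem mul_ite_neg_le_mul {α : Type*} [Ring α] [LinearOrder α] [IsStrictOrderedRing α]
    {l q : α} (hq0 : 0 ≤ q) (hq1 : q ≤ 1) : l * (if l < 0 then 1 else 0) ≤ l * q := by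
  split_ifs with h
  · simpa using mul_le_mul_of_nonpos_left hq1 h.le
  · simpa using mul_nonneg (not_lt.1 h) hq0

section StarMonoid

variable {R : Type*} [Monoid R] [StarMul R] {U : R}

theorem isIdempotentElem_star_mul_mul (hU : U ∈ unitary R) {P : R}
    (hP : IsIdempotentElem P) : IsIdempotentElem (star U * P * U) := by
  rw [IsIdempotentElem, show star U * P * U * (star U * P * U) = star U * (P * (U * star U) * P) * U
    by simp only [mul_assoc], Unitary.mul_star_self_of_mem hU, mul_one, hP.eq]

theorem Unitary.star_mul_mul_injective (hU : U ∈ unitary R) :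
    Function.Injective fun P => star U * P * U := by
  intro P P' h
  have := congr_arg (U * · * star U) h
  simp only [← mul_assoc, Unitary.mul_star_self_of_mem hU, one_mul] at this
  simpa [mul_assoc, Unitary.mul_star_self_of_mem hU] using this

end StarMonoid

theorem star_eigenvectorUnitary_mul_negProj_mul {C : Matrix (Fin n) (Fin n) ℂ}
    (hC : C.IsHermitian) :
    star (hC.eigenvectorUnitary : Matrix (Fin n) (Fin n) ℂ) * negProj hC *
        (hC.eigenvectorUnitary : Matrix (Fin n) (Fin n) ℂ) =
      diagonal fun i => if hC.eigenvalues i < 0 then 1 else 0 := by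
  have hU := hC.eigenvectorUnitary.2
  simp only [negProj, ← mul_assoc, Unitary.star_mul_self_of_mem hU, one_mul]
  simp only [mul_assoc, Unitary.star_mul_self_of_mem hU, mul_one]

/-- for an invertible Hermitian matrix `C` and any orthogonal projection
matrix `Π`, `Tr(CΠ) ≥ Tr(CΠ_C)` (the traces being real), with equality if and only if
`Π = Π_C`, where `Π_C = 𝟙_{(-∞,0)}(C)`. -/
theorem trace_min_over_projections (C : Matrix (Fin n) (Fin n) ℂ) (hC : C.IsHermitian)
    (hinv : IsUnit C)
    (P : Matrix (Fin n) (Fin n) ℂ) (hP_sa : Pᴴ = P) (hP_idem : P * P = P) :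
    (C * negProj hC).trace.re ≤ (C * P).trace.re ∧
      ((C * P).trace = (C * negProj hC).trace ↔ P = negProj hC) := by
  have hU := hC.eigenvectorUnitary.2
  set U : Matrix (Fin n) (Fin n) ℂ := ↑hC.eigenvectorUnitary
  obtain ⟨Q, hQ_def⟩ : ∃ Q, star U * P * U = Q := ⟨_, rfl⟩
  set e : Fin n → ℝ := fun i => if hC.eigenvalues i < 0 then 1 else 0
  have hQ : Q.IsHermitian := hQ_def ▸ isHermitian_conjTranspose_mul_mul U hP_sa
  have hQ2 : IsIdempotentElem Q := hQ_def ▸ isIdempotentElem_star_mul_mul hU hP_idem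
  have htrP : (C * P).trace = ((∑ i, hC.eigenvalues i * RCLike.re (Q i i) : ℝ) : ℂ) := by
    rw [hC.trace_mul_eq_sum_eigenvalues_mul, hQ_def]
    push_cast
    exact Finset.sum_congr rfl fun i _ => congr_arg _ (hQ.coe_re_apply_self i).symm
  have htrN : (C * negProj hC).trace = ((∑ i, hC.eigenvalues i * e i : ℝ) : ℂ) := by
    rw [hC.trace_mul_eq_sum_eigenvalues_mul, star_eigenvectorUnitary_mul_negProj_mul]
    simp [e, apply_ite]
  have hle : ∀ i ∈ Finset.univ, hC.eigenvalues i * e i ≤ hC.eigenvalues i * RCLike.re (Q i i) :=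
    fun i _ => mul_ite_neg_le_mul (hQ.re_apply_self_nonneg hQ2 i) (hQ.re_apply_self_le_one hQ2 i)
  refine ⟨by simpa [htrP, htrN] using Finset.sum_le_sum hle, fun heq => ?_, fun h => h ▸ rfl⟩
  rw [htrP, htrN, Complex.ofReal_inj, eq_comm, Finset.sum_eq_sum_iff_of_le hle] at heq
  have hdiag : ∀ i, RCLike.re (Q i i) = e i := fun i =>
    (mul_left_cancel₀ (hC.eigenvalues_ne_zero_of_isUnit hinv i) (heq i (Finset.mem_univ i))).symm
  refine Unitary.star_mul_mul_injective hU ?_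
  change star U * P * U = star U * negProj hC * U
  rw [hQ_def, star_eigenvectorUnitary_mul_negProj_mul,
    hQ.eq_diagonal_of_re_apply_self_eq_zero_or_one hQ2 fun i => ?_]
  · simp [hdiag, e, apply_ite]
  · rw [hdiag]; by_cases h : hC.eigenvalues i < 0 <;> simp [e, h]
end
end
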